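/- arXiv:2503.20094 — 3 statements merged into one kernel-verified Lean document; each statement's English description precedes it below -/
import Mathlib

section
/- Suppose j : V → M is an elementary embedding with critical point κ and α < ((2^κ)⁺)^M. Let D be the ultrafilter on κ derived from j using α (D = {X ⊆ κ : α ∈ j(X)}) and let k : M_D → M be the canonical factor embedding k([f]_D) = j(f)(α). Then crit(k) > α. -/
namespace PaperFormal

/-- the language of set theory: a single binary relation (membership). -/
inductive memRel : ℕ → Type
  | mem : memRel 2

def memLang : FirstOrder.Language :=
  ⟨fun _ => Empty, memRel⟩

/-- the universe `V` of sets, as a structure in the language of set theory. -/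
noncomputable instance zfStructure : memLang.Structure ZFSet where
  funMap := fun f _ => Empty.elim f
  RelMap := fun r v => match r with | .mem => v 0 ∈ v 1

/-- an inner model `M`, i.e. a subclass of `V` with the membership structure. -/
noncomputable def subStructure (M : ZFSet → Prop) :
    memLang.Structure { x : ZFSet // M x } where
  funMap := fun f _ => Empty.elim f
  RelMap := fun r v => match r with | .mem => (v 0).val ∈ (v 1).val

/-- `x` is a (von Neumann) ordinal: a transitive set of transitive sets. -/
def ZIsOrd (x : ZFSet) : Prop :=
  x.IsTransitive ∧ ∀ y ∈ x, ZFSet.IsTransitive y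

/-!
For `ξ < κ` let `d(ξ)` be the least ordinal such that some functional relation `S(ξ)` maps
subsets of `d(ξ)` onto `ξ + 1`. By elementarity, `d₀ = j(d)(α)` is, in `M`, the least ordinal
whose subsets map onto `α + 1`, witnessed by `S₀ = j(S)(α)`; the surjection `F` gives `d₀ ≤ κ`.
For `β ≤ α` pick `Y ⊆ d₀` in `M` with `S₀(Y) = β`. Since `j` fixes every ordinal below `κ`,
`j(Y) ∩ d₀ = Y`, so `β = j(f)(α)` for `f(ξ) = S(ξ)(Y ∩ d(ξ))`.

Elementarity is applied to formulas with named variables, Kuratowski-pair membership and bounded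
quantifiers; compiled into `memLang`-formulas, they mean the intended thing in any transitive
class.
-/

open FirstOrder Language Structure ZFSet

inductive Fml : Type
  | mem (x y : ℕ)
  | eq (x y : ℕ)
  | pairMem (x y f : ℕ)
  | not (φ : Fml)
  | and (φ ψ : Fml)
  | or (φ ψ : Fml)
  | imp (φ ψ : Fml)
  | iff (φ ψ : Fml)
  | all (x : ℕ) (φ : Fml)
  | ex (x : ℕ) (φ : Fml)
  | ball (x y : ℕ) (φ : Fml)

namespace Fml

open Function

def Sat (M : ZFSet → Prop) : Fml → (ℕ → ZFSet) → Prop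
  | mem x y, e => e x ∈ e y
  | eq x y, e => e x = e y
  | pairMem x y f, e => pair (e x) (e y) ∈ e f
  | not φ, e => ¬ φ.Sat M e
  | and φ ψ, e => φ.Sat M e ∧ ψ.Sat M e
  | or φ ψ, e => φ.Sat M e ∨ ψ.Sat M e
  | imp φ ψ, e => φ.Sat M e → ψ.Sat M e
  | iff φ ψ, e => (φ.Sat M e ↔ ψ.Sat M e)
  | all x φ, e => ∀ a, M a → φ.Sat M (update e x a)
  | ex x φ, e => ∃ a, M a ∧ φ.Sat M (update e x a)
  | ball x y φ, e => ∀ a ∈ e y, φ.Sat M (update e x a)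

end Fml

section Compile

variable {n : ℕ}

def liftVar : ℕ ⊕ Fin n → ℕ ⊕ Fin (n + 1) := Sum.map id Fin.castSucc

def newVar (n : ℕ) : ℕ ⊕ Fin (n + 1) := Sum.inr (Fin.last n)

def memBF (a b : ℕ ⊕ Fin n) : memLang.BoundedFormula ℕ n :=
  Relations.boundedFormula₂ (L := memLang) memRel.mem (Term.var a) (Term.var b)

def eqBF (a b : ℕ ⊕ Fin n) : memLang.BoundedFormula ℕ n :=
  Term.bdEqual (Term.var a) (Term.var b)

def singletonBF (u x : ℕ ⊕ Fin n) : memLang.BoundedFormula ℕ n :=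
  (memBF (newVar n) (liftVar u) ⇔ eqBF (newVar n) (liftVar x)).all

def doubletonBF (u x y : ℕ ⊕ Fin n) : memLang.BoundedFormula ℕ n :=
  (memBF (newVar n) (liftVar u) ⇔
    (eqBF (newVar n) (liftVar x) ⊔ eqBF (newVar n) (liftVar y))).all

/-- The members `{x}` and `{x, y}` of the pair are asserted to exist: a transitive class need not
be closed under pairing. -/
def pairMemBF (x y f : ℕ ⊕ Fin n) : memLang.BoundedFormula ℕ n :=
  let p := newVar n
  let u := newVar (n + 1)
  let x' := liftVar (liftVar x)
  let y' := liftVar (liftVar y)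
  (memBF p (liftVar f) ⊓
    ((memBF u (liftVar p) ⊓ singletonBF u x').ex ⊓
      ((memBF u (liftVar p) ⊓ doubletonBF u x' y').ex ⊓
        (memBF u (liftVar p) ⟹ (singletonBF u x' ⊔ doubletonBF u x' y')).all))).ex

end Compile

namespace Fml

open Function

/-- `ρ` sends each named variable to a free variable or to one of the `n` bound variables. -/
def toBoundedFormula : Fml → {n : ℕ} → (ℕ → ℕ ⊕ Fin n) → memLang.BoundedFormula ℕ n
  | mem x y, _, ρ => memBF (ρ x) (ρ y)
  | eq x y, _, ρ => eqBF (ρ x) (ρ y)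
  | pairMem x y f, _, ρ => pairMemBF (ρ x) (ρ y) (ρ f)
  | not φ, _, ρ => (φ.toBoundedFormula ρ).not
  | and φ ψ, _, ρ => φ.toBoundedFormula ρ ⊓ ψ.toBoundedFormula ρ
  | or φ ψ, _, ρ => φ.toBoundedFormula ρ ⊔ ψ.toBoundedFormula ρ
  | imp φ ψ, _, ρ => (φ.toBoundedFormula ρ).imp (ψ.toBoundedFormula ρ)
  | iff φ ψ, _, ρ => (φ.toBoundedFormula ρ).iff (ψ.toBoundedFormula ρ)
  | all x φ, n, ρ => (φ.toBoundedFormula (update (liftVar ∘ ρ) x (newVar n))).all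
  | ex x φ, n, ρ => (φ.toBoundedFormula (update (liftVar ∘ ρ) x (newVar n))).ex
  | ball x y φ, n, ρ =>
      ((memBF (newVar n) (liftVar (ρ y))).imp
        (φ.toBoundedFormula (update (liftVar ∘ ρ) x (newVar n)))).all

def toFormula (φ : Fml) : memLang.Formula ℕ := φ.toBoundedFormula (n := 0) Sum.inl

end Fml

theorem eq_of_forall_mem_iff_of_trans {M : ZFSet → Prop} (hM : ∀ x, M x → ∀ y ∈ x, M y)
    {u b : ZFSet} (hu : M u) (hb : ∀ c ∈ b, M c) (h : ∀ c, M c → (c ∈ u ↔ c ∈ b)) : u = b :=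
  ext fun c => ⟨fun hc => (h c (hM u hu c hc)).1 hc, fun hc => (h c (hb c hc)).2 hc⟩

theorem pair_mem_iff_of_trans {M : ZFSet → Prop} (hM : ∀ x, M x → ∀ y ∈ x, M y)
    {x y f : ZFSet} (hf : M f) :
    (∃ p, M p ∧ p ∈ f ∧ (∃ u, M u ∧ u ∈ p ∧ u = {x}) ∧ (∃ u, M u ∧ u ∈ p ∧ u = {x, y}) ∧
      ∀ u, M u → u ∈ p → u = {x} ∨ u = {x, y}) ↔ pair x y ∈ f := by
  constructor
  · rintro ⟨p, hp, hpf, ⟨_, -, hx, rfl⟩, ⟨_, -, hxy, rfl⟩, hall⟩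
    convert hpf using 1
    ext c
    simp only [pair, mem_pair]
    exact ⟨by rintro (rfl | rfl) <;> assumption, fun hc => hall c (hM p hp c hc) hc⟩
  · intro h
    have hp := hM f hf _ h
    refine ⟨_, hp, h, ⟨{x}, ?_, by simp [pair], rfl⟩, ⟨{x, y}, ?_, by simp [pair], rfl⟩,
      fun u _ hu => by simpa [pair] using hu⟩
    all_goals exact hM _ hp _ (by simp [pair])

section Realize

attribute [local instance] subStructure

variable {M : ZFSet → Prop} {n : ℕ} (v : ℕ → {x // M x}) (xs : Fin n → {x // M x})

@[simp] theorem elim_snoc_liftVar (a : {x // M x}) (i : ℕ ⊕ Fin n) :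
    Sum.elim v (Fin.snoc xs a) (liftVar i) = Sum.elim v xs i := by
  cases i <;> simp [liftVar]

@[simp] theorem elim_snoc_newVar (a : {x // M x}) :
    Sum.elim v (Fin.snoc xs a) (newVar n) = a := by
  simp [newVar]

open Function in
theorem val_elim_snoc_update (ρ : ℕ → ℕ ⊕ Fin n) (x : ℕ) (a : {x // M x}) :
    (fun k => (Sum.elim v (Fin.snoc xs a) (update (liftVar ∘ ρ) x (newVar n) k)).val) =
      update (fun k => (Sum.elim v xs (ρ k)).val) x a.val := by
  funext k
  by_cases hk : k = x
  · subst hk; simp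
  · simp [hk]

@[simp] theorem realize_memBF (a b : ℕ ⊕ Fin n) :
    (memBF a b).Realize v xs ↔ (Sum.elim v xs a).val ∈ (Sum.elim v xs b).val :=
  BoundedFormula.realize_rel₂

@[simp] theorem realize_eqBF (a b : ℕ ⊕ Fin n) :
    (eqBF a b).Realize v xs ↔ (Sum.elim v xs a).val = (Sum.elim v xs b).val := by
  simp [eqBF, Subtype.ext_iff]

theorem realize_singletonBF (hM : ∀ x, M x → ∀ y ∈ x, M y) (u x : ℕ ⊕ Fin n) :
    (singletonBF u x).Realize v xs ↔ (Sum.elim v xs u).val = {(Sum.elim v xs x).val} := by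
  simp only [singletonBF, BoundedFormula.realize_all, BoundedFormula.realize_iff,
    realize_memBF, realize_eqBF, elim_snoc_liftVar, elim_snoc_newVar, Subtype.forall]
  refine ⟨fun h => eq_of_forall_mem_iff_of_trans hM (Sum.elim v xs u).2 ?_ ?_, ?_⟩
  · simpa using (Sum.elim v xs x).2
  · simpa using h
  · intro h c _; simp [h]

theorem realize_doubletonBF (hM : ∀ x, M x → ∀ y ∈ x, M y) (u x y : ℕ ⊕ Fin n) :
    (doubletonBF u x y).Realize v xs ↔
      (Sum.elim v xs u).val = {(Sum.elim v xs x).val, (Sum.elim v xs y).val} := by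
  simp only [doubletonBF, BoundedFormula.realize_all, BoundedFormula.realize_iff,
    BoundedFormula.realize_sup, realize_memBF, realize_eqBF, elim_snoc_liftVar,
    elim_snoc_newVar, Subtype.forall]
  refine ⟨fun h => eq_of_forall_mem_iff_of_trans hM (Sum.elim v xs u).2 ?_ ?_, ?_⟩
  · simpa using ⟨(Sum.elim v xs x).2, (Sum.elim v xs y).2⟩
  · simpa using h
  · intro h c _; simp [h]

theorem realize_pairMemBF (hM : ∀ x, M x → ∀ y ∈ x, M y) (x y f : ℕ ⊕ Fin n) :
    (pairMemBF x y f).Realize v xs ↔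
      pair (Sum.elim v xs x).val (Sum.elim v xs y).val ∈ (Sum.elim v xs f).val := by
  simp only [pairMemBF, BoundedFormula.realize_ex, BoundedFormula.realize_inf,
    BoundedFormula.realize_all, BoundedFormula.realize_imp, BoundedFormula.realize_sup,
    realize_memBF, realize_singletonBF _ _ hM, realize_doubletonBF _ _ hM, elim_snoc_liftVar,
    elim_snoc_newVar, Subtype.exists, Subtype.forall, exists_prop]
  exact pair_mem_iff_of_trans hM (Sum.elim v xs f).2

theorem Fml.realize_toBoundedFormula (hM : ∀ x, M x → ∀ y ∈ x, M y) (φ : Fml) (ρ : ℕ → ℕ ⊕ Fin n) :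
    (φ.toBoundedFormula ρ).Realize v xs ↔ φ.Sat M fun k => (Sum.elim v xs (ρ k)).val := by
  induction φ generalizing n with
  | mem x y => exact realize_memBF v xs _ _
  | eq x y => exact realize_eqBF v xs _ _
  | pairMem x y f => exact realize_pairMemBF v xs hM _ _ _
  | not φ ih => simp only [toBoundedFormula, Sat, BoundedFormula.realize_not, ih]
  | and φ ψ ihφ ihψ => simp only [toBoundedFormula, Sat, BoundedFormula.realize_inf, ihφ, ihψ]
  | or φ ψ ihφ ihψ => simp only [toBoundedFormula, Sat, BoundedFormula.realize_sup, ihφ, ihψ]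
  | imp φ ψ ihφ ihψ => simp only [toBoundedFormula, Sat, BoundedFormula.realize_imp, ihφ, ihψ]
  | iff φ ψ ihφ ihψ => simp only [toBoundedFormula, Sat, BoundedFormula.realize_iff, ihφ, ihψ]
  | all x φ ih =>
    simp only [toBoundedFormula, Sat, BoundedFormula.realize_all, ih, val_elim_snoc_update,
      Subtype.forall]
  | ex x φ ih =>
    simp only [toBoundedFormula, Sat, BoundedFormula.realize_ex, ih, val_elim_snoc_update,
      Subtype.exists, exists_prop]
  | ball x y φ ih =>
    simp only [toBoundedFormula, Sat, BoundedFormula.realize_all, BoundedFormula.realize_imp,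
      realize_memBF, elim_snoc_newVar, elim_snoc_liftVar, ih, val_elim_snoc_update, Subtype.forall]
    exact ⟨fun h a ha => h a (hM _ (Sum.elim v xs (ρ y)).2 a ha) ha, fun h a _ => h a⟩

end Realize

section Transfer

attribute [local instance] subStructure

def zfEquivSubtypeTrue : ZFSet ≃[memLang] Subtype fun _ : ZFSet => True where
  toEquiv := (Equiv.subtypeUnivEquiv fun _ => trivial).symm
  map_fun' f := Empty.elim f
  map_rel' r _ := by cases r; rfl

theorem Fml.realize_toFormula_iff_sat_univ (φ : Fml) (e : ℕ → ZFSet) :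
    φ.toFormula.Realize e ↔ φ.Sat (fun _ => True) e := by
  rw [← StrongHomClass.realize_formula zfEquivSubtypeTrue, Formula.Realize, Fml.toFormula,
    Fml.realize_toBoundedFormula _ _ (fun _ _ _ _ => trivial)]
  rfl

def elementaryEmbeddingOf {M : ZFSet → Prop} {j : ZFSet → ZFSet} (hjM : ∀ x, M (j x))
    (helem : ∀ (n : ℕ) (φ : memLang.Formula (Fin n)) (v : Fin n → ZFSet),
      φ.Realize v ↔ φ.Realize (M := {x // M x}) fun i => ⟨j (v i), hjM (v i)⟩) :
    ZFSet ↪ₑ[memLang] {x // M x} where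
  toFun x := ⟨j x, hjM x⟩
  map_formula' n φ v := (helem n φ v).symm

theorem Fml.sat_univ_iff_sat_apply {M : ZFSet → Prop} (hM : ∀ x, M x → ∀ y ∈ x, M y)
    (J : ZFSet ↪ₑ[memLang] {x // M x}) (φ : Fml) (e : ℕ → ZFSet) :
    φ.Sat (fun _ => True) e ↔ φ.Sat M fun k => (J (e k)).val := by
  rw [← Fml.realize_toFormula_iff_sat_univ, ← J.map_formula, Formula.Realize, Fml.toFormula,
    Fml.realize_toBoundedFormula _ _ hM]
  rfl

end Transfer

/-- `S` is, as seen in the class `M`, a functional relation under which every `w ≤ ξ` is the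
image of a subset of `d`; `M = fun _ => True` gives the notion in `V`. -/
def IsPowersetSurjIn (M : ZFSet → Prop) (S d ξ : ZFSet) : Prop :=
  (∀ q, M q → ∀ w, M w → ∀ w', M w' → pair q w ∈ S → pair q w' ∈ S → w = w') ∧
    ∀ w, M w → (w ∈ ξ ∨ w = ξ) → ∃ q, M q ∧ q ⊆ d ∧ pair q w ∈ S

def ChoosesLeastPowersetSurjIn (M : ZFSet → Prop) (κ g s : ZFSet) : Prop :=
  ∀ ξ ∈ κ, ∃ d, M d ∧ ∃ S, M S ∧ pair ξ d ∈ g ∧ pair ξ S ∈ s ∧ ZIsOrd d ∧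
    (∀ d' ∈ d, ¬ ∃ S', M S' ∧ IsPowersetSurjIn M S' d' ξ) ∧ IsPowersetSurjIn M S d ξ

/-- With `g`, `s` as in `ChoosesLeastPowersetSurjIn`, `b` sends `ξ` to the value of `s ξ` at
`Y ∩ g ξ`. -/
def ChoosesPowersetSurjValueIn (M : ZFSet → Prop) (κ g s Y b : ZFSet) : Prop :=
  ∀ ξ ∈ κ, ∀ d, M d → ∀ S, M S → pair ξ d ∈ g → pair ξ S ∈ s →
    ∃ w, M w ∧ pair ξ w ∈ b ∧ ∀ y, M y → (∀ z, M z → (z ∈ y ↔ z ∈ Y ∧ z ∈ d)) →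
      ∀ w', M w' → pair y w' ∈ S → pair y w ∈ S

namespace Fml.Var

abbrev κ : ℕ := 0
abbrev g : ℕ := 1
abbrev s : ℕ := 2
abbrev Y : ℕ := 3
abbrev b : ℕ := 4
abbrev ξ : ℕ := 5
abbrev d : ℕ := 6
abbrev S : ℕ := 7
abbrev d' : ℕ := 8
abbrev S' : ℕ := 9
abbrev q : ℕ := 10
abbrev w : ℕ := 11
abbrev w' : ℕ := 12
abbrev y : ℕ := 13
abbrev z : ℕ := 14
abbrev a : ℕ := 15
abbrev c : ℕ := 16

end Fml.Var

namespace Fml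

open Var

def powersetSurj (S d ξ : ℕ) : Fml :=
  .and (.all q (.all w (.all w' (.imp (.pairMem q w S) (.imp (.pairMem q w' S) (.eq w w'))))))
    (.all w (.imp (.or (.mem w ξ) (.eq w ξ))
      (.ex q (.and (.ball z q (.mem z d)) (.pairMem q w S)))))

def isOrd (d : ℕ) : Fml :=
  .and (.ball z d (.ball a z (.mem a d))) (.ball z d (.ball a z (.ball c a (.mem c z))))

def choosesLeastPowersetSurj : Fml :=
  .ball ξ κ (.ex d (.ex S (.and (.pairMem ξ d g) (.and (.pairMem ξ S s) (.and (isOrd d)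
    (.and (.ball d' d (.not (.ex S' (powersetSurj S' d' ξ)))) (powersetSurj S d ξ)))))))

def choosesPowersetSurjValue : Fml :=
  .ball ξ κ (.all d (.all S (.imp (.pairMem ξ d g) (.imp (.pairMem ξ S s)
    (.ex w (.and (.pairMem ξ w b) (.all y
      (.imp (.all z (.iff (.mem z y) (.and (.mem z Y) (.mem z d))))
        (.all w' (.imp (.pairMem y w' S) (.pairMem y w S)))))))))))

theorem sat_choosesLeastPowersetSurj (M : ZFSet → Prop) (e : ℕ → ZFSet) :
    choosesLeastPowersetSurj.Sat M e ↔ ChoosesLeastPowersetSurjIn M (e κ) (e g) (e s) :=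
  Iff.rfl

theorem sat_choosesPowersetSurjValue (M : ZFSet → Prop) (e : ℕ → ZFSet) :
    choosesPowersetSurjValue.Sat M e ↔
      ChoosesPowersetSurjValueIn M (e κ) (e g) (e s) (e Y) (e b) :=
  Iff.rfl

end Fml

section Elementary

attribute [local instance] subStructure

variable {M : ZFSet → Prop}

theorem mem_iff_apply_mem_apply (hM : ∀ x, M x → ∀ y ∈ x, M y)
    (J : ZFSet ↪ₑ[memLang] {x // M x}) {x y : ZFSet} : x ∈ y ↔ (J x).val ∈ (J y).val :=
  Fml.sat_univ_iff_sat_apply hM J (.mem 0 1) fun k => [x, y].getD k ∅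

theorem mem_iff_mem_apply_and_mem (hM : ∀ x, M x → ∀ y ∈ x, M y)
    (J : ZFSet ↪ₑ[memLang] {x // M x}) {κ Y d : ZFSet} (hfix : ∀ β ∈ κ, (J β).val = β)
    (hdκ : d ⊆ κ) (hYd : Y ⊆ d) (z : ZFSet) : z ∈ Y ↔ z ∈ (J Y).val ∧ z ∈ d := by
  refine ⟨fun hz => ⟨?_, hYd hz⟩, fun ⟨hz, hzd⟩ => ?_⟩
  · simpa [hfix z (hdκ (hYd hz))] using (mem_iff_apply_mem_apply hM J).1 hz
  · exact (mem_iff_apply_mem_apply hM J).2 (by rwa [hfix z (hdκ hzd)])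

theorem ChoosesLeastPowersetSurjIn.map (hM : ∀ x, M x → ∀ y ∈ x, M y)
    (J : ZFSet ↪ₑ[memLang] {x // M x}) {κ g s : ZFSet}
    (h : ChoosesLeastPowersetSurjIn (fun _ => True) κ g s) :
    ChoosesLeastPowersetSurjIn M (J κ).val (J g).val (J s).val := by
  have := Fml.sat_univ_iff_sat_apply hM J Fml.choosesLeastPowersetSurj fun k => [κ, g, s].getD k ∅
  rw [Fml.sat_choosesLeastPowersetSurj, Fml.sat_choosesLeastPowersetSurj] at this
  exact this.1 h

theorem ChoosesPowersetSurjValueIn.map (hM : ∀ x, M x → ∀ y ∈ x, M y)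
    (J : ZFSet ↪ₑ[memLang] {x // M x}) {κ g s Y b : ZFSet}
    (h : ChoosesPowersetSurjValueIn (fun _ => True) κ g s Y b) :
    ChoosesPowersetSurjValueIn M (J κ).val (J g).val (J s).val (J Y).val (J b).val := by
  have := Fml.sat_univ_iff_sat_apply hM J Fml.choosesPowersetSurjValue
    fun k => [κ, g, s, Y, b].getD k ∅
  rw [Fml.sat_choosesPowersetSurjValue, Fml.sat_choosesPowersetSurjValue] at this
  exact this.1 h

end Elementary

section Graph

attribute [local instance] Classical.allZFSetDefinable

theorem pair_mem_map_iff {f : ZFSet → ZFSet} {x z w : ZFSet} :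
    pair z w ∈ map f x ↔ z ∈ x ∧ w = f z := by
  simp only [mem_map, pair_inj]
  constructor
  · rintro ⟨z', hz', rfl, rfl⟩; exact ⟨hz', rfl⟩
  · rintro ⟨hz, rfl⟩; exact ⟨z, hz, rfl, rfl⟩

theorem isPowersetSurjIn_univ_map_id {ξ : ZFSet} (hξ : ξ.IsOrdinal) :
    IsPowersetSurjIn (fun _ => True) (map id (insert ξ ξ)) ξ ξ := by
  refine ⟨fun q _ w _ w' _ hw hw' => ?_, fun w _ hw => ⟨w, trivial, ?_, ?_⟩⟩
  · rw [(pair_mem_map_iff.1 hw).2, (pair_mem_map_iff.1 hw').2]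
  · rcases hw with hw | rfl
    exacts [hξ.subset_of_mem hw, subset_rfl]
  · exact pair_mem_map_iff.2 ⟨mem_insert_iff.2 hw.symm, rfl⟩

theorem exists_least_powersetSurj {ξ : ZFSet} (hξ : ξ.IsOrdinal) :
    ∃ d S, ZIsOrd d ∧ (∀ d' ∈ d, ¬ ∃ S', True ∧ IsPowersetSurjIn (fun _ => True) S' d' ξ) ∧
      IsPowersetSurjIn (fun _ => True) S d ξ := by
  obtain ⟨d, ⟨hd, S, hS⟩, hmin⟩ :=
    mem_wf.has_min {d | d.IsOrdinal ∧ ∃ S, IsPowersetSurjIn (fun _ => True) S d ξ}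
      ⟨ξ, hξ, _, isPowersetSurjIn_univ_map_id hξ⟩
  exact ⟨d, S, isOrdinal_iff_forall_mem_isTransitive.1 hd,
    fun d' hd' ⟨S', _, hS'⟩ => hmin d' ⟨hd.mem hd', S', hS'⟩ hd', hS⟩

theorem choosesLeastPowersetSurjIn_univ_map {κ : ZFSet} {dOf SOf : ZFSet → ZFSet}
    (h : ∀ ξ ∈ κ, ZIsOrd (dOf ξ) ∧
      (∀ d' ∈ dOf ξ, ¬ ∃ S', True ∧ IsPowersetSurjIn (fun _ => True) S' d' ξ) ∧
      IsPowersetSurjIn (fun _ => True) (SOf ξ) (dOf ξ) ξ) :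
    ChoosesLeastPowersetSurjIn (fun _ => True) κ (map dOf κ) (map SOf κ) := fun ξ hξ =>
  ⟨dOf ξ, trivial, SOf ξ, trivial, pair_mem_map_iff.2 ⟨hξ, rfl⟩, pair_mem_map_iff.2 ⟨hξ, rfl⟩,
    h ξ hξ⟩

theorem choosesPowersetSurjValueIn_univ_map (κ Y : ZFSet) (dOf SOf : ZFSet → ZFSet) :
    ChoosesPowersetSurjValueIn (fun _ => True) κ (map dOf κ) (map SOf κ) Y
      (map (fun ξ => Classical.epsilon fun w => pair (Y ∩ dOf ξ) w ∈ SOf ξ) κ) := by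
  intro ξ hξ d _ S _ hd hS
  obtain rfl := (pair_mem_map_iff.1 hd).2
  obtain rfl := (pair_mem_map_iff.1 hS).2
  refine ⟨_, trivial, pair_mem_map_iff.2 ⟨hξ, rfl⟩, fun y _ hy w' _ hw' => ?_⟩
  obtain rfl : y = Y ∩ dOf ξ := ext fun z => by simpa using hy z trivial
  exact Classical.epsilon_spec (p := fun w => pair (Y ∩ dOf ξ) w ∈ SOf ξ) ⟨w', hw'⟩

theorem isFunc_map_image (f : ZFSet → ZFSet) (x : ZFSet) : IsFunc x (image f x) (map f x) :=
  map_isFunc.2 fun z hz => mem_image.2 ⟨z, hz, rfl⟩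

end Graph

theorem subset_of_isPowersetSurjIn {M : ZFSet → Prop} {d κ ξ F : ZFSet} (hd : ZIsOrd d)
    (hleast : ∀ d' ∈ d, ¬ ∃ S', M S' ∧ IsPowersetSurjIn M S' d' ξ) (hκ : ZIsOrd κ) (hFM : M F)
    (hF : IsPowersetSurjIn M F κ ξ) : d ⊆ κ :=
  ((isOrdinal_iff_forall_mem_isTransitive.2 hκ).mem_or_subset
    (isOrdinal_iff_forall_mem_isTransitive.2 hd)).resolve_left fun hκd => hleast κ hκd ⟨F, hFM, hF⟩

theorem isPowersetSurjIn_of_isFunc {M : ZFSet → Prop} {pκ κ α F : ZFSet}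
    (hpκ : ∀ x, x ∈ pκ ↔ M x ∧ x ⊆ κ) (hFfun : IsFunc pκ (insert α α) F)
    (hFsurj : ∀ β ∈ insert α α, ∃ x ∈ pκ, pair x β ∈ F) : IsPowersetSurjIn M F κ α := by
  refine ⟨fun q _ w _ w' _ hw hw' => ?_, fun w _ hw => ?_⟩
  · exact (hFfun.2 q (pair_mem_prod.1 (hFfun.1 hw)).1).unique hw hw'
  · obtain ⟨x, hx, hxw⟩ := hFsurj w (mem_insert_iff.2 hw.symm)
    exact ⟨x, ((hpκ x).1 hx).1, ((hpκ x).1 hx).2, hxw⟩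

theorem stmt15_general (M : ZFSet → Prop)
    (htrans : ∀ x, M x → ∀ y ∈ x, M y)
    (j : ZFSet → ZFSet) (hjM : ∀ x, M (j x))
    -- `j` is elementary from `(V, ∈)` to `(M, ∈)`:
    (helem : ∀ (n : ℕ) (φ : memLang.Formula (Fin n)) (v : Fin n → ZFSet),
      φ.Realize v ↔
        @FirstOrder.Language.Formula.Realize memLang { x : ZFSet // M x }
          (subStructure M) (Fin n) φ (fun i => ⟨j (v i), hjM (v i)⟩))
    -- `κ` is the critical point of `j`:
    (κ : ZFSet) (hκord : ZIsOrd κ)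
    (hfix : ∀ β ∈ κ, j β = β)
    -- `α` is an ordinal of `M` with `α < ((2^κ)⁺)^M`: `M` has a surjection from
    -- `P(κ)^M` onto `α + 1`:
    (α : ZFSet) (hα : α ∈ j κ)
    (pκ : ZFSet) (hpκ : ∀ x, x ∈ pκ ↔ (M x ∧ x ⊆ κ))
    (F : ZFSet) (hFM : M F) (hFfun : ZFSet.IsFunc pκ (insert α α) F)
    (hFsurj : ∀ β ∈ (insert α α : ZFSet), ∃ x ∈ pκ, ZFSet.pair x β ∈ F) :
    -- conclusion: `crit(k) > α`, i.e. `α + 1 ⊆ ran(k)`: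
    ∀ β, (β ∈ α ∨ β = α) →
      ∃ f r : ZFSet, ZFSet.IsFunc κ r f ∧ ZFSet.pair α β ∈ j f := by
  intro β hβ
  let J := elementaryEmbeddingOf hjM helem
  have hαM : M α := htrans _ (hjM κ) α hα
  have hβM : M β := hβ.elim (htrans α hαM β) (· ▸ hαM)
  choose! dOf SOf hdS using fun ξ (hξ : ξ ∈ κ) =>
    exists_least_powersetSurj ((isOrdinal_iff_forall_mem_isTransitive.2 hκord).mem hξ)
  obtain ⟨d₀, hd₀M, S₀, hS₀M, hd₀, hS₀, hd₀ord, hd₀least, hS₀surj⟩ :=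
    (choosesLeastPowersetSurjIn_univ_map hdS).map htrans J α hα
  have hd₀κ : d₀ ⊆ κ := subset_of_isPowersetSurjIn hd₀ord hd₀least hκord hFM
    (isPowersetSurjIn_of_isFunc hpκ hFfun hFsurj)
  obtain ⟨Y, hYM, hYd₀, hYβ⟩ := hS₀surj.2 β hβM hβ
  obtain ⟨w, hwM, hwb, hw⟩ := (choosesPowersetSurjValueIn_univ_map κ Y dOf SOf).map htrans J
    α hα d₀ hd₀M S₀ hS₀M hd₀ hS₀
  have hY : ∀ z, M z → (z ∈ Y ↔ z ∈ j Y ∧ z ∈ d₀) := fun z _ =>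
    mem_iff_mem_apply_and_mem htrans J hfix hd₀κ hYd₀ z
  have hwβ : w = β := hS₀surj.1 Y hYM w hwM β hβM (hw Y hYM hY β hβM hYβ) hYβ
  exact ⟨_, _, isFunc_map_image _ κ, hwβ ▸ hwb⟩

/-- suppose `j : V → M` is an elementary embedding with critical point
`κ` and `α < ((2^κ)⁺)^M` (rendered, as used in the proof, by: in `M` there is a
surjection from `P(κ)^M` onto `α + 1`).  Let `D = {X ⊆ κ : α ∈ j(X)}` be the derived
ultrafilter and `k : M_D → M` the factor embedding `k([f]_D) = j(f)(α)`.  Then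
`crit(k) > α`; equivalently (since `k` is the factor embedding of the transitive
collapse of the ultrapower), every ordinal `β ≤ α` lies in `ran(k)`, i.e. is of the
form `j(f)(α)` for some function `f` with domain `κ`. -/
theorem stmt15 (M : ZFSet → Prop)
    (htrans : ∀ x, M x → ∀ y ∈ x, M y)
    (j : ZFSet → ZFSet) (hjM : ∀ x, M (j x))
    -- `j` is elementary from `(V, ∈)` to `(M, ∈)`:
    (helem : ∀ (n : ℕ) (φ : memLang.Formula (Fin n)) (v : Fin n → ZFSet),
      φ.Realize v ↔
        @FirstOrder.Language.Formula.Realize memLang { x : ZFSet // M x }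
          (subStructure M) (Fin n) φ (fun i => ⟨j (v i), hjM (v i)⟩))
    -- `κ` is the critical point of `j`:
    (κ : ZFSet) (hκord : ZIsOrd κ)
    (hfix : ∀ β ∈ κ, j β = β) (hmove : j κ ≠ κ)
    -- `α` is an ordinal of `M` with `α < ((2^κ)⁺)^M`: `M` has a surjection from
    -- `P(κ)^M` onto `α + 1`:
    (α : ZFSet) (hαord : ZIsOrd α) (hαM : M α) (hα : α ∈ j κ)
    (pκ : ZFSet) (hpκM : M pκ) (hpκ : ∀ x, x ∈ pκ ↔ (M x ∧ x ⊆ κ))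
    (F : ZFSet) (hFM : M F) (hFfun : ZFSet.IsFunc pκ (insert α α) F)
    (hFsurj : ∀ β ∈ (insert α α : ZFSet), ∃ x ∈ pκ, ZFSet.pair x β ∈ F) :
    -- conclusion: `crit(k) > α`, i.e. `α + 1 ⊆ ran(k)`:
    ∀ β, (β ∈ α ∨ β = α) →
      ∃ f r : ZFSet, ZFSet.IsFunc κ r f ∧ ZFSet.pair α β ∈ j f :=
  stmt15_general M htrans j hjM helem κ hκord hfix α hα pκ hpκ F hFM hFfun hFsurj

end PaperFormal
end

section
/- If U ≤_RK W (U is the Rudin–Keisler projection of W via some f) then ch(U) ≤ ch(W): the minimum cardinality of a ⊆*-base for U is at most that for W; moreover 𝔱(W) ≤ 𝔱(U). -/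
open Cardinal

namespace PaperFormal

universe u

/-- `A ⊆* B` modulo sets of size `< κ`. -/
def AlmostSubC {Z : Type u} (κ : Cardinal.{u}) (A B : Set Z) : Prop :=
  #(A \ B : Set Z) < κ

/-- `ℬ` is a `⊆*`-base for the ultrafilter `U`. -/
def IsBaseC {Z : Type u} (κ : Cardinal.{u}) (U : Ultrafilter Z) (ℬ : Set (Set Z)) : Prop :=
  (∀ B ∈ ℬ, B ∈ U) ∧ ∀ A ∈ U, ∃ B ∈ ℬ, AlmostSubC κ B A

/-- the character `ch(U)`: least size of a `⊆*`-base. -/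
noncomputable def chC {Z : Type u} (κ : Cardinal.{u}) (U : Ultrafilter Z) : Cardinal.{u} :=
  sInf { μ : Cardinal.{u} | ∃ ℬ, IsBaseC κ U ℬ ∧ #ℬ = μ }

/-- the depth `𝔱(U)`: least regular `λ` such that there is a `⊆*`-decreasing
`λ`-sequence in `U` with no `⊆*`-lower bound in `U`. -/
noncomputable def tC {Z : Type u} (κ : Cardinal.{u}) (U : Ultrafilter Z) : Cardinal.{u} :=
  sInf { μ : Cardinal.{u} | μ.IsRegular ∧ ∃ S : Ordinal.{u} → Set Z,
    (∀ i < μ.ord, S i ∈ U) ∧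
    (∀ i j, i < j → j < μ.ord → AlmostSubC κ (S j) (S i)) ∧
    ¬ ∃ A ∈ U, ∀ i < μ.ord, AlmostSubC κ A (S i) }


/-!
Images under `f` of a base of `W` form a base of `U = f_* W`, so `ch(U) ≤ ch(W)`.

For the depth, let `S` be a `⊆*`-decreasing sequence in `U` of regular length `μ` without lower
bound, and suppose `𝔱(W) > μ`. Then every `⊆*`-decreasing sequence in `W` of length `i < μ` has
a lower bound: otherwise its restriction to a fundamental sequence of `i` would witness
`𝔱(W) ≤ cof i < μ`. Hence one can build recursively a `⊆*`-decreasing sequence `T` in `W` with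
`T i ⊆ f⁻¹ (S i)`, each stage lying below a lower bound of the earlier ones. As `μ < 𝔱(W)`, `T`
has a lower bound `B ∈ W`, and then `f '' B` is a lower bound of `S` in `U`, a contradiction.

That `𝔱(U)` is a genuine minimum rather than `sInf ∅ = 0` is seen by running the same recursion in
`U`, removing `κ` points at every stage: if all decreasing sequences were bounded, the resulting
tower would be injective on all ordinals.
-/
open Set Order

section AlmostSub

variable {Z : Type u} {κ : Cardinal.{u}}

theorem almostSubC_refl (hκ : 0 < κ) (A : Set Z) : AlmostSubC κ A A := by
  simpa [AlmostSubC] using hκ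

theorem AlmostSubC.mono {A A' B B' : Set Z} (h : AlmostSubC κ A B) (hA : A' ⊆ A) (hB : B ⊆ B') :
    AlmostSubC κ A' B' :=
  (mk_le_mk_of_subset (sdiff_le_sdiff hA hB)).trans_lt h

theorem AlmostSubC.trans (hκ : ℵ₀ ≤ κ) {A B C : Set Z} (hAB : AlmostSubC κ A B)
    (hBC : AlmostSubC κ B C) : AlmostSubC κ A C :=
  calc #(A \ C : Set Z) ≤ #(A \ B ∪ B \ C : Set Z) := mk_le_mk_of_subset (sdiff_triangle A B C)
    _ ≤ #(A \ B : Set Z) + #(B \ C : Set Z) := mk_union_le _ _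
    _ < κ := add_lt_of_lt hκ hAB hBC

theorem AlmostSubC.image {X : Type u} (f : Z → X) {B : Set Z} {A : Set X}
    (h : AlmostSubC κ B (f ⁻¹' A)) : AlmostSubC κ (f '' B) A := by
  unfold AlmostSubC
  rw [← image_sdiff_preimage]
  exact mk_image_le.trans_lt h

end AlmostSub

section Character

variable {X Y : Type u} {κ : Cardinal.{u}}

theorem IsBaseC.map {W : Ultrafilter Y} {ℬ : Set (Set Y)} (hℬ : IsBaseC κ W ℬ) (f : Y → X) :
    IsBaseC κ (W.map f) (image f '' ℬ) := by
  refine ⟨?_, fun A hA => ?_⟩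
  · rintro _ ⟨B, hB, rfl⟩
    exact Filter.image_mem_map (hℬ.1 B hB)
  · obtain ⟨B, hB, hBA⟩ := hℬ.2 _ (Ultrafilter.mem_map.1 hA)
    exact ⟨f '' B, mem_image_of_mem _ hB, hBA.image f⟩

theorem chC_map_le (hκ : 0 < κ) (W : Ultrafilter Y) (f : Y → X) :
    chC κ (W.map f) ≤ chC κ W := by
  have hne : { μ | ∃ ℬ, IsBaseC κ W ℬ ∧ #ℬ = μ }.Nonempty :=
    ⟨_, {A | A ∈ W}, ⟨fun _ hB => hB, fun A hA => ⟨A, hA, almostSubC_refl hκ A⟩⟩, rfl⟩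
  obtain ⟨ℬ, hℬ, hcard⟩ := csInf_mem hne
  calc chC κ (W.map f) ≤ #(image f '' ℬ) := csInf_le' ⟨_, hℬ.map f, rfl⟩
    _ ≤ #ℬ := mk_image_le
    _ = chC κ W := hcard

end Character

theorem exists_subset_mk_eq_mk_sdiff_eq {Z : Type u} {A : Set Z} (hA : ℵ₀ ≤ #A) :
    ∃ C ⊆ A, #C = #A ∧ #(A \ C : Set Z) = #A := by
  obtain ⟨e⟩ : Nonempty (A ≃ A ⊕ A) := Cardinal.eq.1 (by rw [mk_sum, lift_id, add_eq_self hA])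
  refine ⟨(↑) '' (e ⁻¹' range Sum.inl), Subtype.coe_image_subset _ _, ?_, ?_⟩
  · rw [mk_image_eq Subtype.val_injective, mk_preimage_equiv, mk_range_eq _ Sum.inl_injective]
  · rw [← image_val_compl, ← preimage_compl, compl_range_inl, mk_image_eq Subtype.val_injective,
      mk_preimage_equiv, mk_range_eq _ Sum.inr_injective]

theorem exists_subset_not_almostSubC {Z : Type u} {κ : Cardinal.{u}} (hκ : ℵ₀ ≤ κ)
    {V : Ultrafilter Z} (huni : ∀ A ∈ V, #(A : Set Z) = κ) {A : Set Z} (hA : A ∈ V) :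
    ∃ B ∈ V, B ⊆ A ∧ ¬ AlmostSubC κ A B := by
  obtain ⟨C, hCA, hC, hAC⟩ := exists_subset_mk_eq_mk_sdiff_eq (huni A hA ▸ hκ)
  rcases V.mem_or_compl_mem C with hCV | hCV
  · exact ⟨C, hCV, hCA, by simp [AlmostSubC, hAC, huni A hA]⟩
  · refine ⟨A \ C, V.inter_mem hA hCV, sdiff_subset, ?_⟩
    simp [AlmostSubC, sdiff_sdiff_cancel_left hCA, hC, huni A hA]

section Sequences

variable {Z : Type u} {κ : Cardinal.{u}} {V : Ultrafilter Z}

def AlmostDecreasing (κ : Cardinal.{u}) (V : Ultrafilter Z) (o : Ordinal.{u})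
    (S : Ordinal.{u} → Set Z) : Prop :=
  (∀ i < o, S i ∈ V) ∧ ∀ i j, i < j → j < o → AlmostSubC κ (S j) (S i)

def IsAlmostLowerBound (κ : Cardinal.{u}) (o : Ordinal.{u}) (S : Ordinal.{u} → Set Z)
    (A : Set Z) : Prop :=
  ∀ i < o, AlmostSubC κ A (S i)

def depthSet (κ : Cardinal.{u}) (V : Ultrafilter Z) : Set Cardinal.{u} :=
  { μ | μ.IsRegular ∧ ∃ S, AlmostDecreasing κ V μ.ord S ∧
    ¬ ∃ A ∈ V, IsAlmostLowerBound κ μ.ord S A }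

theorem tC_eq_sInf_depthSet (κ : Cardinal.{u}) (V : Ultrafilter Z) :
    tC κ V = sInf (depthSet κ V) := by
  simp only [tC, depthSet, AlmostDecreasing, IsAlmostLowerBound, and_assoc]

theorem AlmostDecreasing.almostSubC_of_le (hκ : 0 < κ) {o : Ordinal.{u}}
    {S : Ordinal.{u} → Set Z} (hS : AlmostDecreasing κ V o S) {i j : Ordinal.{u}} (hij : i ≤ j)
    (hj : j < o) : AlmostSubC κ (S j) (S i) := by
  rcases hij.lt_or_eq with hij | rfl
  · exact hS.2 i j hij hj
  · exact almostSubC_refl hκ _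

theorem AlmostDecreasing.exists_lowerBound_of_not_isSuccLimit (hκ : 0 < κ) {o : Ordinal.{u}}
    {S : Ordinal.{u} → Set Z} (hS : AlmostDecreasing κ V o S) (ho : ¬ IsSuccLimit o) :
    ∃ A ∈ V, IsAlmostLowerBound κ o S A := by
  rcases Ordinal.zero_or_succ_or_isSuccLimit o with rfl | ⟨k, rfl⟩ | hlim
  · exact ⟨univ, Filter.univ_mem, fun i hi => absurd hi (not_lt_zero (a := i))⟩
  · exact ⟨S k, hS.1 k (lt_succ k),
      fun i hi => hS.almostSubC_of_le hκ (lt_succ_iff.1 hi) (lt_succ k)⟩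
  · exact absurd hlim ho

theorem AlmostDecreasing.cof_mem_depthSet (hκ : ℵ₀ ≤ κ) {o : Ordinal.{u}}
    {S : Ordinal.{u} → Set Z} (hS : AlmostDecreasing κ V o S)
    (hnb : ¬ ∃ A ∈ V, IsAlmostLowerBound κ o S A) : o.cof ∈ depthSet κ V := by
  have hκ0 : 0 < κ := aleph0_pos.trans_le hκ
  have hlim : IsSuccLimit o := by
    by_contra h
    exact hnb (hS.exists_lowerBound_of_not_isSuccLimit hκ0 h)
  obtain ⟨g, hg⟩ := Ordinal.exists_isFundamentalSeq (o := o) rfl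
  refine ⟨isRegular_cof hlim, fun α => if h : α < o.cof.ord then S (g ⟨α, h⟩) else ∅,
    ⟨fun α hα => ?_, fun α β hαβ hβ => ?_⟩, ?_⟩
  · simpa only [dif_pos hα] using hS.1 _ (g _).2
  · simpa only [dif_pos hβ, dif_pos (hαβ.trans hβ)] using
      hS.2 _ _ (hg.strictMono (show (⟨α, hαβ.trans hβ⟩ : Iio _) < ⟨β, hβ⟩ from hαβ)) (g _).2
  · rintro ⟨A, hA, hlb⟩
    refine hnb ⟨A, hA, fun j hj => ?_⟩
    obtain ⟨_, ⟨α, rfl⟩, hjα⟩ := hg.isCofinal_range ⟨j, hj⟩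
    have hAα := hlb α α.2
    simp only [dif_pos (mem_Iio.1 α.2)] at hAα
    exact hAα.trans hκ (hS.almostSubC_of_le hκ0 hjα (g α).2)

end Sequences

section Tower

variable {Z : Type u} {κ : Cardinal.{u}} {V : Ultrafilter Z}

/-- Stage `i` is `step i` applied to a chosen `⊆*`-lower bound in `V` of the earlier stages,
or to `univ` if there is none. -/
noncomputable def descendingTower (κ : Cardinal.{u}) (V : Ultrafilter Z)
    (step : Ordinal.{u} → Set Z → Set Z) : Ordinal.{u} → Set Z :=
  Ordinal.lt_wf.fix fun i T =>
    open Classical in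
    step i (if h : ∃ A ∈ V, ∀ j (hj : j < i), AlmostSubC κ A (T j hj) then h.choose else univ)

open Classical in
theorem descendingTower_eq (step : Ordinal.{u} → Set Z → Set Z) (i : Ordinal.{u}) :
    descendingTower κ V step i =
      step i (if h : ∃ A ∈ V, IsAlmostLowerBound κ i (descendingTower κ V step) A
        then h.choose else univ) :=
  Ordinal.lt_wf.fix_eq _ i

variable {step : Ordinal.{u} → Set Z → Set Z} {o : Ordinal.{u}}

theorem almostDecreasing_of_forall_eq_step
    (hstep : ∀ i < o, ∀ A ∈ V, step i A ∈ V ∧ step i A ⊆ A) {T : Ordinal.{u} → Set Z}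
    (hT : ∀ i < o, ∃ A ∈ V, IsAlmostLowerBound κ i T A ∧ T i = step i A) :
    AlmostDecreasing κ V o T := by
  refine ⟨fun i hi => ?_, fun i j hij hj => ?_⟩
  · obtain ⟨A, hA, -, hTi⟩ := hT i hi
    exact hTi ▸ (hstep i hi A hA).1
  · obtain ⟨A, hA, hlb, hTj⟩ := hT j hj
    exact (hlb i hij).mono (hTj ▸ (hstep j hj A hA).2) subset_rfl

theorem descendingTower_spec (hstep : ∀ i < o, ∀ A ∈ V, step i A ∈ V ∧ step i A ⊆ A)
    (hbound : ∀ i < o, ∀ T, AlmostDecreasing κ V i T → ∃ A ∈ V, IsAlmostLowerBound κ i T A) :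
    ∀ i < o, ∃ A ∈ V, IsAlmostLowerBound κ i (descendingTower κ V step) A ∧
      descendingTower κ V step i = step i A := by
  intro i
  induction i using WellFoundedLT.induction with
  | _ i ih =>
    intro hi
    have hdec : AlmostDecreasing κ V i (descendingTower κ V step) :=
      almostDecreasing_of_forall_eq_step (fun j hj => hstep j (hj.trans hi))
        (fun j hj => ih j hj (hj.trans hi))
    have h := hbound i hi _ hdec
    classical
    rw [descendingTower_eq, dif_pos h]
    exact ⟨h.choose, h.choose_spec.1, h.choose_spec.2, rfl⟩

theorem almostDecreasing_descendingTower
    (hstep : ∀ i < o, ∀ A ∈ V, step i A ∈ V ∧ step i A ⊆ A)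
    (hbound : ∀ i < o, ∀ T, AlmostDecreasing κ V i T → ∃ A ∈ V, IsAlmostLowerBound κ i T A) :
    AlmostDecreasing κ V o (descendingTower κ V step) :=
  almostDecreasing_of_forall_eq_step hstep (descendingTower_spec hstep hbound)

end Tower

section Depth

variable {Z : Type u} {κ : Cardinal.{u}}

theorem depthSet_nonempty (hκ : ℵ₀ ≤ κ) {V : Ultrafilter Z}
    (huni : ∀ A ∈ V, #(A : Set Z) = κ) : (depthSet κ V).Nonempty := by
  by_contra hempty
  have hbound : ∀ i T, AlmostDecreasing κ V i T → ∃ A ∈ V, IsAlmostLowerBound κ i T A :=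
    fun i T hT => by_contra fun hnb => hempty ⟨_, hT.cof_mem_depthSet hκ hnb⟩
  choose! shrink hshrink using fun A (hA : A ∈ V) => exists_subset_not_almostSubC hκ huni hA
  set T := descendingTower κ V fun _ => shrink
  have hT : ∀ i j, i < j → T i ≠ T j := by
    intro i j hij hTij
    obtain ⟨A, hA, hlb, hTj⟩ := descendingTower_spec (o := Order.succ j)
      (fun _ _ A hA => ⟨(hshrink A hA).1, (hshrink A hA).2.1⟩) (fun i _ => hbound i) j
      (Order.lt_succ j)
    have hAj : AlmostSubC κ A (T j) := hTij ▸ hlb i hij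
    exact (hshrink A hA).2.2 (hTj ▸ hAj)
  exact Cardinal.not_injective_limitation_set T fun i _ j _ hij => by_contra fun hne =>
    (Ne.lt_or_gt hne).elim (fun h => hT i j h hij) (fun h => hT j i h hij.symm)

theorem tC_le_of_mem_depthSet_map {X : Type u} (hκ : ℵ₀ ≤ κ) {W : Ultrafilter Z}
    {f : Z → X} {μ : Cardinal.{u}} (hμ : μ ∈ depthSet κ (W.map f)) : tC κ W ≤ μ := by
  obtain ⟨hreg, S, hS, hnb⟩ := hμ
  by_contra! hlt
  rw [tC_eq_sInf_depthSet] at hlt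
  have hnot : ∀ ν ∈ depthSet κ W, μ < ν := fun ν hν => hlt.trans_le (csInf_le' hν)
  have hTS : ∀ i, descendingTower κ W (fun i A => A ∩ f ⁻¹' S i) i ⊆ f ⁻¹' S i := fun i => by
    rw [descendingTower_eq]
    exact inter_subset_right
  set T := descendingTower κ W fun i A => A ∩ f ⁻¹' S i
  have hT : AlmostDecreasing κ W μ.ord T := by
    refine almostDecreasing_descendingTower
      (fun i hi A hA => ⟨W.inter_mem hA (hS.1 i hi), inter_subset_left⟩) fun i hi T' hT' => ?_
    by_contra hnb'
    exact (hnot _ (hT'.cof_mem_depthSet hκ hnb')).not_gt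
      ((Ordinal.cof_le_card i).trans_lt (Cardinal.lt_ord.1 hi))
  obtain ⟨B, hB, hBT⟩ : ∃ B ∈ W, IsAlmostLowerBound κ μ.ord T B :=
    by_contra fun h => (hnot μ ⟨hreg, T, hT, h⟩).false
  exact hnb ⟨f '' B, Filter.image_mem_map hB,
    fun i hi => ((hBT i hi).mono subset_rfl (hTS i)).image f⟩

end Depth

theorem stmt16_general {X Y : Type u} (κ : Cardinal.{u}) (hκ : Cardinal.aleph0 ≤ κ)
    (U : Ultrafilter X) (W : Ultrafilter Y)
    (hUuni : ∀ A ∈ U, #(A : Set X) = κ)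
    (f : Y → X) (hf : U = W.map f) :
    chC κ U ≤ chC κ W ∧ tC κ W ≤ tC κ U := by
  subst hf
  refine ⟨chC_map_le (aleph0_pos.trans_le hκ) W f, ?_⟩
  rw [tC_eq_sInf_depthSet κ (W.map f)]
  exact le_csInf (depthSet_nonempty hκ hUuni) fun μ hμ => tC_le_of_mem_depthSet_map hκ hμ

/-- if `U, W` are uniform ultrafilters on sets `X, Y` of the same
infinite cardinality `κ` and `U ≤_RK W` (via `f`), then `ch(U) ≤ ch(W)` and
`𝔱(W) ≤ 𝔱(U)`. -/
theorem stmt16 {X Y : Type u} (κ : Cardinal.{u}) (hκ : Cardinal.aleph0 ≤ κ)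
    (hX : #X = κ) (hY : #Y = κ)
    (U : Ultrafilter X) (W : Ultrafilter Y)
    (hUuni : ∀ A ∈ U, #(A : Set X) = κ) (hWuni : ∀ A ∈ W, #(A : Set Y) = κ)
    (f : Y → X) (hf : U = W.map f) :
    chC κ U ≤ chC κ W ∧ tC κ W ≤ tC κ U :=
  stmt16_general κ hκ U W hUuni f hf

end PaperFormal
end

section
/- Let κ be measurable with κ^{<κ} = κ, U, W κ-complete ultrafilters on κ with U ≤_RK W witnessed by a surjection f : κ → κ. Then the map φ : 𝕄_W → 𝕄_U defined by φ(a, A) = (f[a], f[A]) is a projection of forcing notions: it is order-preserving, and whenever q ≤ φ(p) in 𝕄_U there is p' ≤ p in 𝕄_W with φ(p') ≤ q. -/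
open Cardinal Set

namespace PaperFormal

/-- `A` is unbounded in `κ` (as a set of ordinals below `κ`). -/
def UnboundedIn (κ : Ordinal.{0}) (A : Set Ordinal) : Prop :=
  ∀ α < κ, ∃ β ∈ A, α ≤ β

/-- `A ⊆* B`: almost inclusion (mod bounded) below `κ`. -/
def AlmostSub (κ : Ordinal.{0}) (A B : Set Ordinal) : Prop :=
  ∃ α < κ, ∀ β ∈ A, α ≤ β → β ∈ B

/-- `C` is closed in `κ`. -/
def ClosedIn (κ : Ordinal.{0}) (C : Set Ordinal) : Prop :=
  ∀ α, α < κ → α ≠ 0 → (∀ β < α, (C ∩ Set.Ioo β α).Nonempty) → α ∈ C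

/-- `C` is a club (closed unbounded set) in `κ`. -/
def IsClub (κ : Ordinal.{0}) (C : Set Ordinal) : Prop :=
  C ⊆ Set.Iio κ ∧ UnboundedIn κ C ∧ ClosedIn κ C

/-- `f` maps `κ` into `κ`. -/
def FunOn (κ : Ordinal.{0}) (f : Ordinal → Ordinal) : Prop :=
  ∀ β < κ, f β < κ

/-- almost everywhere domination `f ≤* g` on `κ`. -/
def LeStar (κ : Ordinal.{0}) (f g : Ordinal → Ordinal) : Prop :=
  ∃ α < κ, ∀ β, α ≤ β → β < κ → f β ≤ g β

def UnboundedFunFam (κ : Ordinal.{0}) (𝒜 : Set (Ordinal → Ordinal)) : Prop :=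
  (∀ f ∈ 𝒜, FunOn κ f) ∧ ∀ g, FunOn κ g → ∃ f ∈ 𝒜, ¬ LeStar κ f g

def DominatingFunFam (κ : Ordinal.{0}) (𝒜 : Set (Ordinal → Ordinal)) : Prop :=
  (∀ f ∈ 𝒜, FunOn κ f) ∧ ∀ g, FunOn κ g → ∃ f ∈ 𝒜, LeStar κ g f

/-- the generalized bounding number `𝔟_κ`. -/
noncomputable def bNum (κ : Ordinal.{0}) : Cardinal :=
  sInf { μ : Cardinal.{0} | ∃ 𝒜, UnboundedFunFam κ 𝒜 ∧ #𝒜 = Cardinal.lift.{1} μ }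

/-- the generalized dominating number `𝔡_κ`. -/
noncomputable def dNum (κ : Ordinal.{0}) : Cardinal :=
  sInf { μ : Cardinal.{0} | ∃ 𝒜, DominatingFunFam κ 𝒜 ∧ #𝒜 = Cardinal.lift.{1} μ }

/-- a (proper) filter on `κ`. -/
structure IsKFilter (κ : Ordinal.{0}) (F : Set (Set Ordinal)) : Prop where
  subset : ∀ A ∈ F, A ⊆ Set.Iio κ
  univ_mem : Set.Iio κ ∈ F
  upward : ∀ A ∈ F, ∀ B, B ⊆ Set.Iio κ → A ⊆ B → B ∈ F
  inter : ∀ A ∈ F, ∀ B ∈ F, A ∩ B ∈ F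
  proper : ∅ ∉ F

/-- an ultrafilter on `κ`. -/
structure IsKUltrafilter (κ : Ordinal.{0}) (U : Set (Set Ordinal)) extends IsKFilter κ U : Prop where
  decide : ∀ A, A ⊆ Set.Iio κ → A ∈ U ∨ (Set.Iio κ \ A) ∈ U

/-- uniformity: every member is unbounded (equivalently, for regular `κ`, of size `κ`). -/
def Uniform (κ : Ordinal.{0}) (F : Set (Set Ordinal)) : Prop :=
  ∀ A ∈ F, UnboundedIn κ A

/-- `κ`-completeness. -/
def KComplete (κ : Ordinal.{0}) (F : Set (Set Ordinal)) : Prop :=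
  ∀ s : Set (Set Ordinal), s ⊆ F → s.Nonempty → #s < Cardinal.lift.{1} κ.card → ⋂₀ s ∈ F

/-- closure under diagonal intersections. -/
def DiagClosed (κ : Ordinal.{0}) (F : Set (Set Ordinal)) : Prop :=
  ∀ A : Ordinal → Set Ordinal, (∀ i < κ, A i ∈ F) →
    {β | β < κ ∧ ∀ i < β, β ∈ A i} ∈ F

/-- a normal ultrafilter on `κ`: `κ`-complete, contains all clubs, closed under
diagonal intersections. -/
def NormalUF (κ : Ordinal.{0}) (U : Set (Set Ordinal)) : Prop :=
  IsKUltrafilter κ U ∧ Uniform κ U ∧ KComplete κ U ∧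
    (∀ C, IsClub κ C → C ∈ U) ∧ DiagClosed κ U

/-- `ℬ` is a `⊆*`-base for `F`. -/
def IsBase (κ : Ordinal.{0}) (F ℬ : Set (Set Ordinal)) : Prop :=
  ℬ ⊆ F ∧ ∀ A ∈ F, ∃ B ∈ ℬ, AlmostSub κ B A

/-- the character of a filter. -/
noncomputable def chNum (κ : Ordinal.{0}) (F : Set (Set Ordinal)) : Cardinal :=
  sInf { μ : Cardinal.{0} | ∃ ℬ, IsBase κ F ℬ ∧ #ℬ = Cardinal.lift.{1} μ }

/-- there is a `⊆*`-decreasing `λ`-sequence in `F` with no `⊆*`-lower bound in `F`. -/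
def HasTower (κ : Ordinal.{0}) (F : Set (Set Ordinal)) (lam : Cardinal) : Prop :=
  ∃ S : Ordinal → Set Ordinal, (∀ i < lam.ord, S i ∈ F) ∧
    (∀ i j, i < j → j < lam.ord → AlmostSub κ (S j) (S i)) ∧
    ¬ ∃ Y ∈ F, ∀ i < lam.ord, AlmostSub κ Y (S i)

/-- the depth `𝔱(F)` of a filter. -/
noncomputable def tNum (κ : Ordinal.{0}) (F : Set (Set Ordinal)) : Cardinal :=
  sInf { μ : Cardinal.{0} | μ.IsRegular ∧ HasTower κ F μ }

/-- the ultrafilter number `𝔲_κ`. -/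
noncomputable def uNum (κ : Ordinal.{0}) : Cardinal :=
  sInf { μ : Cardinal.{0} | ∃ U, IsKUltrafilter κ U ∧ Uniform κ U ∧ chNum κ U = μ }

/-- the complete ultrafilter number `𝔲^com_κ`. -/
noncomputable def uComNum (κ : Ordinal.{0}) : Cardinal :=
  sInf { μ : Cardinal.{0} | ∃ U, IsKUltrafilter κ U ∧ Uniform κ U ∧ KComplete κ U ∧ chNum κ U = μ }

/-- `U` is a simple `P_λ`-point: a uniform ultrafilter with a `⊆*`-decreasing
generating sequence of length `λ`. -/
def SimplePPoint (κ : Ordinal.{0}) (lam : Cardinal) (U : Set (Set Ordinal)) : Prop :=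
  IsKUltrafilter κ U ∧ Uniform κ U ∧
    ∃ S : Ordinal → Set Ordinal, (∀ i < lam.ord, S i ∈ U) ∧
      (∀ i j, i < j → j < lam.ord → AlmostSub κ (S j) (S i)) ∧
      ∀ A ∈ U, ∃ i < lam.ord, AlmostSub κ (S i) A

/-- a `⊆*`-decreasing generating sequence of length `λ` for a filter `F`. -/
def SimplePFilter (κ : Ordinal.{0}) (lam : Cardinal) (F : Set (Set Ordinal)) : Prop :=
  ∃ S : Ordinal → Set Ordinal, (∀ i < lam.ord, S i ∈ F) ∧
    (∀ i j, i < j → j < lam.ord → AlmostSub κ (S j) (S i)) ∧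
    ∀ A ∈ F, ∃ i < lam.ord, AlmostSub κ (S i) A

/-- `ℬ` is a `π`-base for `U`: unbounded sets, almost contained in members of `U`. -/
def IsPiBase (κ : Ordinal.{0}) (U ℬ : Set (Set Ordinal)) : Prop :=
  (∀ B ∈ ℬ, B ⊆ Set.Iio κ ∧ UnboundedIn κ B) ∧ ∀ A ∈ U, ∃ B ∈ ℬ, AlmostSub κ B A

/-- the `π`-character `πch(U)`. -/
noncomputable def piChNum (κ : Ordinal.{0}) (U : Set (Set Ordinal)) : Cardinal :=
  sInf { μ : Cardinal.{0} | ∃ ℬ, IsPiBase κ U ℬ ∧ #ℬ = Cardinal.lift.{1} μ }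

/-- `Y` is a pseudo-intersection of the family `𝒜`. -/
def IsPseudoInter (κ : Ordinal.{0}) (𝒜 : Set (Set Ordinal)) (Y : Set Ordinal) : Prop :=
  Y ⊆ Set.Iio κ ∧ UnboundedIn κ Y ∧ ∀ A ∈ 𝒜, AlmostSub κ Y A

/-- `π𝔭(U)`: the least size of a subfamily of `U` with no pseudo-intersection. -/
noncomputable def piPNum (κ : Ordinal.{0}) (U : Set (Set Ordinal)) : Cardinal :=
  sInf { μ : Cardinal.{0} | ∃ 𝒜, 𝒜 ⊆ U ∧ #𝒜 = Cardinal.lift.{1} μ ∧ ¬ ∃ Y, IsPseudoInter κ 𝒜 Y }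

/-- a `⊆*`-decreasing `λ`-sequence in `U` unbounded in `([κ]^κ, ⊇*)`. -/
def HasPiTower (κ : Ordinal.{0}) (U : Set (Set Ordinal)) (lam : Cardinal) : Prop :=
  ∃ S : Ordinal → Set Ordinal, (∀ i < lam.ord, S i ∈ U) ∧
    (∀ i j, i < j → j < lam.ord → AlmostSub κ (S j) (S i)) ∧
    ¬ ∃ Y, Y ⊆ Set.Iio κ ∧ UnboundedIn κ Y ∧ ∀ i < lam.ord, AlmostSub κ Y (S i)

/-- `π𝔱(U)`. -/
noncomputable def piTNum (κ : Ordinal.{0}) (U : Set (Set Ordinal)) : Cardinal :=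
  sInf { μ : Cardinal.{0} | μ.IsRegular ∧ HasPiTower κ U μ }

/-- `A` splits `B`. -/
def Splits (κ : Ordinal.{0}) (A B : Set Ordinal) : Prop :=
  UnboundedIn κ (B ∩ A) ∧ UnboundedIn κ (B \ A)

/-- the splitting number `𝔰_κ`. -/
noncomputable def sNum (κ : Ordinal.{0}) : Cardinal :=
  sInf { μ : Cardinal.{0} | ∃ 𝒜 : Set (Set Ordinal), (∀ A ∈ 𝒜, A ⊆ Set.Iio κ) ∧
    (∀ X, X ⊆ Set.Iio κ → UnboundedIn κ X → ∃ A ∈ 𝒜, Splits κ A X) ∧ #𝒜 = Cardinal.lift.{1} μ }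

/-- the reaping number `𝔯_κ`. -/
noncomputable def rNum (κ : Ordinal.{0}) : Cardinal :=
  sInf { μ : Cardinal.{0} | ∃ 𝒜 : Set (Set Ordinal), (∀ A ∈ 𝒜, A ⊆ Set.Iio κ ∧ UnboundedIn κ A) ∧
    (¬ ∃ X, X ⊆ Set.Iio κ ∧ ∀ A ∈ 𝒜, Splits κ X A) ∧ #𝒜 = Cardinal.lift.{1} μ }

/-- `f` is almost one-to-one modulo `U`: bounded-to-one on a set in `U`. -/
def AlmostInjMod (κ : Ordinal.{0}) (U : Set (Set Ordinal)) (f : Ordinal → Ordinal) : Prop :=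
  ∃ X ∈ U, ∀ γ < κ, ∃ α < κ, ∀ β ∈ X, f β = γ → β < α

/-- the pushforward `f_*(U)`. -/
def PushFwd (κ : Ordinal.{0}) (f : Ordinal → Ordinal) (U : Set (Set Ordinal)) :
    Set (Set Ordinal) :=
  { A | A ⊆ Set.Iio κ ∧ (Set.Iio κ ∩ f ⁻¹' A) ∈ U }

/-- countable completeness. -/
def CountablyComplete (U : Set (Set Ordinal)) : Prop :=
  ∀ s : Set (Set Ordinal), s ⊆ U → s.Countable → s.Nonempty → ⋂₀ s ∈ U


/-- a condition of the generalized Mathias forcing `𝕄_F`. -/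
def MathiasCond (κ : Ordinal.{0}) (F : Set (Set Ordinal))
    (p : Set Ordinal × Set Ordinal) : Prop :=
  p.1 ⊆ Set.Iio κ ∧ #p.1 < Cardinal.lift.{1} κ.card ∧ p.2 ∈ F

/-- the Mathias ordering: `(a, A) ≤ (b, B)` iff `b ⊆ a`, `A ⊆ B`, `a \ b ⊆ B`. -/
def MathiasLe (p q : Set Ordinal × Set Ordinal) : Prop :=
  q.1 ⊆ p.1 ∧ p.2 ⊆ q.2 ∧ p.1 \ q.1 ⊆ q.2

universe u

theorem exists_subset_image_eq_mk_eq {α β : Type u} {f : α → β} {s : Set α} {t : Set β}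
    (h : t ⊆ f '' s) : ∃ u ⊆ s, f '' u = t ∧ #u = #t := by
  obtain ⟨v, hvs, rfl⟩ := subset_image_iff.mp h
  obtain ⟨u, hu, hbij⟩ := exists_subset_bijOn v f
  refine ⟨u, hu.trans hvs, hbij.image_eq, ?_⟩
  rw [← hbij.image_eq, mk_image_eq_of_injOn f u hbij.injOn]

theorem mathiasLe_image (f : Ordinal → Ordinal) {p q : Set Ordinal × Set Ordinal}
    (h : MathiasLe p q) : MathiasLe (f '' p.1, f '' p.2) (f '' q.1, f '' q.2) := by
  obtain ⟨h₁, h₂, h₃⟩ := h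
  refine ⟨image_mono h₁, image_mono h₂, ?_⟩
  rintro _ ⟨⟨β, hβ, rfl⟩, hβq⟩
  exact mem_image_of_mem f (h₃ ⟨hβ, fun hq => hβq (mem_image_of_mem f hq)⟩)

section Projection

variable {κ : Ordinal.{0}} {U W : Set (Set Ordinal)} {f : Ordinal → Ordinal}

theorem IsKFilter.image_mem (hW : IsKFilter κ W) (hf : FunOn κ f)
    (hRK : ∀ A ⊆ Iio κ, Iio κ ∩ f ⁻¹' A ∈ W → A ∈ U) {A : Set Ordinal} (hA : A ∈ W) :
    f '' A ∈ U := by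
  have hAκ := hW.subset A hA
  refine hRK _ (image_subset_iff.mpr fun β hβ => hf β (hAκ hβ)) ?_
  exact hW.upward A hA _ inter_subset_left fun β hβ => ⟨hAκ hβ, mem_image_of_mem f hβ⟩

theorem IsKFilter.mathiasCond_image (hW : IsKFilter κ W) (hf : FunOn κ f)
    (hRK : ∀ A ⊆ Iio κ, Iio κ ∩ f ⁻¹' A ∈ W → A ∈ U) {p : Set Ordinal × Set Ordinal}
    (hp : MathiasCond κ W p) : MathiasCond κ U (f '' p.1, f '' p.2) :=
  ⟨image_subset_iff.mpr fun β hβ => hf β (hp.1 hβ), mk_image_le.trans_lt hp.2.1,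
    hW.image_mem hf hRK hp.2.2⟩

/-- Lift each point of `c \ f[b]` to a point of `B` (fewer than `κ` of them, so the new stem stays
small), add the lifts to `b`, and shrink `B` to `B ∩ f⁻¹[C]`. -/
theorem IsKFilter.exists_mathiasLe_image_le (hW : IsKFilter κ W) (hκ : ℵ₀ ≤ κ.card)
    (hUκ : ∀ C ∈ U, C ⊆ Iio κ) (hRK : ∀ A ⊆ Iio κ, A ∈ U → Iio κ ∩ f ⁻¹' A ∈ W)
    {p q : Set Ordinal × Set Ordinal} (hp : MathiasCond κ W p) (hq : MathiasCond κ U q)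
    (hqp : MathiasLe q (f '' p.1, f '' p.2)) :
    ∃ p', MathiasCond κ W p' ∧ MathiasLe p' p ∧ MathiasLe (f '' p'.1, f '' p'.2) q := by
  obtain ⟨b, B⟩ := p
  obtain ⟨c, C⟩ := q
  obtain ⟨hb, hbκ, hB⟩ := hp
  obtain ⟨-, hcκ, hC⟩ := hq
  obtain ⟨hbc, -, hcB⟩ := hqp
  obtain ⟨d, hdB, hfd, hdc⟩ := exists_subset_image_eq_mk_eq hcB
  have hfbd : f '' (b ∪ d) = c := by
    rw [image_union, hfd, union_sdiff_self, union_eq_right.mpr hbc]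
  refine ⟨(b ∪ d, B ∩ (Iio κ ∩ f ⁻¹' C)), ⟨?_, ?_, ?_⟩, ⟨?_, ?_, ?_⟩, ?_⟩
  · exact union_subset hb (hdB.trans (hW.subset B hB))
  · calc #(b ∪ d : Set Ordinal) ≤ #b + #d := mk_union_le b d
      _ < Cardinal.lift.{1} κ.card := add_lt_of_lt (aleph0_le_lift.mpr hκ) hbκ
          (hdc.trans_le (mk_le_mk_of_subset sdiff_subset) |>.trans_lt hcκ)
  · exact hW.inter B hB _ (hRK C (hUκ C hC) hC)
  · exact subset_union_left
  · exact inter_subset_left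
  · exact sdiff_subset_iff.mpr (union_subset_union_right b hdB)
  · rw [hfbd]
    exact ⟨subset_rfl, image_subset_iff.mpr fun β hβ => hβ.2.2, fun γ hγ => absurd hγ.1 hγ.2⟩

end Projection

theorem stmt17_general (κ : Cardinal.{0}) (hunc : Cardinal.aleph0 < κ)
    (U W : Set (Set Ordinal))
    (hU : IsKUltrafilter κ.ord U)
    (hW : IsKUltrafilter κ.ord W)
    (f : Ordinal → Ordinal) (hf : FunOn κ.ord f)
    (hRK : ∀ A, A ⊆ Set.Iio κ.ord → (A ∈ U ↔ (Set.Iio κ.ord ∩ f ⁻¹' A) ∈ W)) :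
    (∀ p, MathiasCond κ.ord W p → MathiasCond κ.ord U (f '' p.1, f '' p.2)) ∧
    (∀ p q, MathiasCond κ.ord W p → MathiasCond κ.ord W q → MathiasLe p q →
      MathiasLe (f '' p.1, f '' p.2) (f '' q.1, f '' q.2)) ∧
    (∀ p, MathiasCond κ.ord W p → ∀ q, MathiasCond κ.ord U q →
      MathiasLe q (f '' p.1, f '' p.2) →
      ∃ p', MathiasCond κ.ord W p' ∧ MathiasLe p' p ∧
        MathiasLe (f '' p'.1, f '' p'.2) q) := by
  have hκ : ℵ₀ ≤ κ.ord.card := (card_ord κ).symm ▸ hunc.le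
  exact ⟨fun _ => hW.mathiasCond_image hf fun A hA => (hRK A hA).mpr,
    fun _ _ _ _ => mathiasLe_image f,
    fun _ hp _ hq => hW.exists_mathiasLe_image_le hκ hU.subset (fun A hA => (hRK A hA).mp) hp hq⟩

/-- if `U ≤_RK W` via a surjection `f`, then
`φ(a, A) = (f[a], f[A])` is a projection from `𝕄_W` onto `𝕄_U`. -/
theorem stmt17 (κ : Cardinal.{0}) (hreg : κ.IsRegular) (hunc : Cardinal.aleph0 < κ)
    (hpow : Cardinal.powerlt κ κ = κ)
    (U W : Set (Set Ordinal))
    (hU : IsKUltrafilter κ.ord U) (hUuni : Uniform κ.ord U) (hUcom : KComplete κ.ord U)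
    (hW : IsKUltrafilter κ.ord W) (hWuni : Uniform κ.ord W) (hWcom : KComplete κ.ord W)
    (f : Ordinal → Ordinal) (hf : FunOn κ.ord f)
    (hsurj : ∀ γ < κ.ord, ∃ β < κ.ord, f β = γ)
    (hRK : ∀ A, A ⊆ Set.Iio κ.ord → (A ∈ U ↔ (Set.Iio κ.ord ∩ f ⁻¹' A) ∈ W)) :
    (∀ p, MathiasCond κ.ord W p → MathiasCond κ.ord U (f '' p.1, f '' p.2)) ∧
    (∀ p q, MathiasCond κ.ord W p → MathiasCond κ.ord W q → MathiasLe p q →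
      MathiasLe (f '' p.1, f '' p.2) (f '' q.1, f '' q.2)) ∧
    (∀ p, MathiasCond κ.ord W p → ∀ q, MathiasCond κ.ord U q →
      MathiasLe q (f '' p.1, f '' p.2) →
      ∃ p', MathiasCond κ.ord W p' ∧ MathiasLe p' p ∧
        MathiasLe (f '' p'.1, f '' p'.2) q) :=
  stmt17_general κ hunc U W hU hW f hf hRK

end PaperFormal
end
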